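/- The quartic polynomial k = x_0^4 + x_1^4 + x_2^4 + x_3^4 + 6(x_0^2x_1^2 − x_1^2x_2^2 + x_1^2x_3^2 + x_0^2x_2^2 − x_0^2x_3^2 + x_2^2x_3^2) ∈ ℂ[x_0,x_1,x_2,x_3] is nonsingular: the only common zero in ℂ^4 of its four partial derivatives is the origin. -/
import Mathlib


open MvPolynomial

/-- The quartic form
`k = x₀⁴ + x₁⁴ + x₂⁴ + x₃⁴ + 6(x₀²x₁² − x₁²x₂² + x₁²x₃² + x₀²x₂² − x₀²x₃² + x₂²x₃²)`. -/
noncomputable def kQuartic : MvPolynomial (Fin 4) ℂ :=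
  X 0 ^ 4 + X 1 ^ 4 + X 2 ^ 4 + X 3 ^ 4 +
    6 * (X 0 ^ 2 * X 1 ^ 2 - X 1 ^ 2 * X 2 ^ 2 + X 1 ^ 2 * X 3 ^ 2 +
      X 0 ^ 2 * X 2 ^ 2 - X 0 ^ 2 * X 3 ^ 2 + X 2 ^ 2 * X 3 ^ 2)

private lemma pd6 (i : Fin 4) : pderiv i (6 : MvPolynomial (Fin 4) ℂ) = 0 := by
  rw [show (6 : MvPolynomial (Fin 4) ℂ) = C 6 from (map_ofNat C 6).symm]; simp

theorem stmt9 :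
    ∀ z : Fin 4 → ℂ,
      (∀ i, MvPolynomial.eval z (MvPolynomial.pderiv i kQuartic) = 0) → z = 0 := by
  intro z h
  have h0 : 4 * z 0 ^ 3 + 12 * z 0 * z 1 ^ 2 + 12 * z 0 * z 2 ^ 2 - 12 * z 0 * z 3 ^ 2 = 0 := by
    rw [← h 0]; simp [kQuartic, pderiv_mul, pderiv_pow, pderiv_X, pd6]; ring
  have h1 : 4 * z 1 ^ 3 + 12 * z 1 * z 0 ^ 2 - 12 * z 1 * z 2 ^ 2 + 12 * z 1 * z 3 ^ 2 = 0 := by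
    rw [← h 1]; simp [kQuartic, pderiv_mul, pderiv_pow, pderiv_X, pd6]; ring
  have h2 : 4 * z 2 ^ 3 + 12 * z 2 * z 0 ^ 2 - 12 * z 2 * z 1 ^ 2 + 12 * z 2 * z 3 ^ 2 = 0 := by
    rw [← h 2]; simp [kQuartic, pderiv_mul, pderiv_pow, pderiv_X, pd6]; ring
  have h3 : 4 * z 3 ^ 3 + 12 * z 3 * z 1 ^ 2 - 12 * z 3 * z 0 ^ 2 + 12 * z 3 * z 2 ^ 2 = 0 := by
    rw [← h 3]; simp [kQuartic, pderiv_mul, pderiv_pow, pderiv_X, pd6]; ring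
  have e0 : z 0 ^ 9 = 0 := by
    linear_combination (-27/32 : ℂ) * z 3 ^ 6 * h0 + (-2997/640 : ℂ) * z 2 ^ 2 * z 3 ^ 4 * h0 + (1539/640 : ℂ) * z 2 ^ 4 * z 3 ^ 2 * h0 + (27/32 : ℂ) * z 2 ^ 6 * h0 + (-1863/320 : ℂ) * z 1 ^ 2 * z 3 ^ 4 * h0 + (6237/640 : ℂ) * z 1 ^ 2 * z 2 ^ 2 * z 3 ^ 2 * h0 + (-1863/320 : ℂ) * z 1 ^ 2 * z 2 ^ 4 * h0 + (81/64 : ℂ) * z 1 ^ 4 * z 3 ^ 2 * h0 + (-81/64 : ℂ) * z 1 ^ 4 * z 2 ^ 2 * h0 + (27/32 : ℂ) * z 1 ^ 6 * h0 + (9/4 : ℂ) * z 0 ^ 2 * z 3 ^ 4 * h0 + (-9/2 : ℂ) * z 0 ^ 2 * z 2 ^ 2 * z 3 ^ 2 * h0 + (9/4 : ℂ) * z 0 ^ 2 * z 2 ^ 4 * h0 + (-9/2 : ℂ) * z 0 ^ 2 * z 1 ^ 2 * z 3 ^ 2 * h0 + (9/2 : ℂ) * z 0 ^ 2 * z 1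 ^ 2 * z 2 ^ 2 * h0 + (9/4 : ℂ) * z 0 ^ 2 * z 1 ^ 4 * h0 + (3/4 : ℂ) * z 0 ^ 4 * z 3 ^ 2 * h0 + (-3/4 : ℂ) * z 0 ^ 4 * z 2 ^ 2 * h0 + (-3/4 : ℂ) * z 0 ^ 4 * z 1 ^ 2 * h0 + (1/4 : ℂ) * z 0 ^ 6 * h0 + (-243/80 : ℂ) * z 0 * z 1 * z 3 ^ 4 * h1 + (5103/640 : ℂ) * z 0 * z 1 * z 2 ^ 2 * z 3 ^ 2 * h1 + (-243/80 : ℂ) * z 0 * z 1 * z 2 ^ 4 * h1 + (405/64 : ℂ) * z 0 * z 1 ^ 3 * z 3 ^ 2 * h1 + (-405/64 : ℂ) * z 0 * z 1 ^ 3 * z 2 ^ 2 * h1 + (-81/32 : ℂ) * z 0 * z 1 ^ 5 * h1 + (-729/320 : ℂ) * z 0 * z 2 * z 3 ^ 4 * h2 + (3321/640 : ℂ) * z 0 * z 2 ^ 3 * z 3 ^ 2 * h2 + (-81/32 : ℂ) * z 0 * z 2 ^ 5 * h2 + (729/320 : ℂ) * z 0 * z 1 ^ 2 * z 2 * z 3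 ^ 2 * h2 + (-567/320 : ℂ) * z 0 * z 1 ^ 2 * z 2 ^ 3 * h2 + (-81/32 : ℂ) * z 0 * z 3 ^ 5 * h3 + (1863/640 : ℂ) * z 0 * z 2 ^ 2 * z 3 ^ 3 * h3 + (-243/320 : ℂ) * z 0 * z 2 ^ 4 * z 3 * h3 + (567/320 : ℂ) * z 0 * z 1 ^ 2 * z 3 ^ 3 * h3
  have e1 : z 1 ^ 9 = 0 := by
    linear_combination (243/320 : ℂ) * z 0 * z 1 * z 3 ^ 4 * h0 + (243/640 : ℂ) * z 0 * z 1 * z 2 ^ 2 * z 3 ^ 2 * h0 + (243/320 : ℂ) * z 0 * z 1 * z 2 ^ 4 * h0 + (27/64 : ℂ) * z 0 * z 1 ^ 3 * z 3 ^ 2 * h0 + (-27/64 : ℂ) * z 0 * z 1 ^ 3 * z 2 ^ 2 * h0 + (-9/32 : ℂ) * z 0 * z 1 ^ 5 * h0 + (81/320 : ℂ) * z 3 ^ 6 * h1 + (81/128 : ℂ) * z 2 ^ 2 * z 3 ^ 4 * h1 + (-891/640 : ℂ) * z 2 ^ 4 * z 3 ^ 2 * h1 + (-81/320 : ℂ)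 * z 2 ^ 6 * h1 + (153/320 : ℂ) * z 1 ^ 2 * z 3 ^ 4 * h1 + (-711/320 : ℂ) * z 1 ^ 2 * z 2 ^ 2 * z 3 ^ 2 * h1 + (153/320 : ℂ) * z 1 ^ 2 * z 2 ^ 4 * h1 + (-3/4 : ℂ) * z 1 ^ 4 * z 3 ^ 2 * h1 + (3/4 : ℂ) * z 1 ^ 4 * z 2 ^ 2 * h1 + (1/4 : ℂ) * z 1 ^ 6 * h1 + (-81/320 : ℂ) * z 0 ^ 2 * z 3 ^ 4 * h1 + (-81/640 : ℂ) * z 0 ^ 2 * z 2 ^ 2 * z 3 ^ 2 * h1 + (-81/320 : ℂ) * z 0 ^ 2 * z 2 ^ 4 * h1 + (-9/64 : ℂ) * z 0 ^ 2 * z 1 ^ 2 * z 3 ^ 2 * h1 + (9/64 : ℂ) * z 0 ^ 2 * z 1 ^ 2 * z 2 ^ 2 * h1 + (3/32 : ℂ) * z 0 ^ 2 * z 1 ^ 4 * h1 + (729/640 : ℂ) * z 1 * z 2 ^ 3 * z 3 ^ 2 * h2 + (-243/320 : ℂ) * z 1 * z 2 ^ 5 * h2 + (243/320 : ℂ) *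 z 1 ^ 3 * z 2 * z 3 ^ 2 * h2 + (-189/320 : ℂ) * z 1 ^ 3 * z 2 ^ 3 * h2 + (-243/320 : ℂ) * z 1 * z 3 ^ 5 * h3 + (729/640 : ℂ) * z 1 * z 2 ^ 2 * z 3 ^ 3 * h3 + (-243/320 : ℂ) * z 1 * z 2 ^ 4 * z 3 * h3 + (189/320 : ℂ) * z 1 ^ 3 * z 3 ^ 3 * h3
  have e2 : z 2 ^ 9 = 0 := by
    linear_combination (243/1280 : ℂ) * z 0 * z 2 * z 3 ^ 4 * h0 + (-189/1280 : ℂ) * z 0 * z 2 ^ 3 * z 3 ^ 2 * h0 + (-9/32 : ℂ) * z 0 * z 2 ^ 5 * h0 + (243/640 : ℂ) * z 0 * z 1 ^ 2 * z 2 * z 3 ^ 2 * h0 + (27/80 : ℂ) * z 0 * z 1 ^ 2 * z 2 ^ 3 * h0 + (567/1280 : ℂ) * z 1 * z 2 * z 3 ^ 4 * h1 + (207/1280 : ℂ) * z 1 * z 2 ^ 3 * z 3 ^ 2 * h1 + (-33/160 : ℂ) * z 1 * z 2 ^ 5 * h1 + (-81/320 : ℂ) * z 1 ^ 3 * z 2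 * z 3 ^ 2 * h1 + (-9/40 : ℂ) * z 1 ^ 3 * z 2 ^ 3 * h1 + (-81/640 : ℂ) * z 0 ^ 2 * z 1 * z 2 * z 3 ^ 2 * h1 + (-9/80 : ℂ) * z 0 ^ 2 * z 1 * z 2 ^ 3 * h1 + (81/1280 : ℂ) * z 3 ^ 6 * h2 + (9/256 : ℂ) * z 2 ^ 2 * z 3 ^ 4 * h2 + (-237/640 : ℂ) * z 2 ^ 4 * z 3 ^ 2 * h2 + (1/4 : ℂ) * z 2 ^ 6 * h2 + (-243/1280 : ℂ) * z 1 ^ 2 * z 3 ^ 4 * h2 + (-27/1280 : ℂ) * z 1 ^ 2 * z 2 ^ 2 * z 3 ^ 2 * h2 + (21/160 : ℂ) * z 1 ^ 2 * z 2 ^ 4 * h2 + (-27/320 : ℂ) * z 1 ^ 4 * z 3 ^ 2 * h2 + (-3/40 : ℂ) * z 1 ^ 4 * z 2 ^ 2 * h2 + (-81/1280 : ℂ) * z 0 ^ 2 * z 3 ^ 4 * h2 + (63/1280 : ℂ) * z 0 ^ 2 * z 2 ^ 2 * z 3 ^ 2 * h2 + (3/32 : ℂ) * z 0 ^ 2 *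 z 2 ^ 4 * h2 + (-243/1280 : ℂ) * z 2 * z 3 ^ 5 * h3 + (513/1280 : ℂ) * z 2 ^ 3 * z 3 ^ 3 * h3 + (-81/640 : ℂ) * z 2 ^ 5 * z 3 * h3
  have e3 : z 3 ^ 9 = 0 := by
    linear_combination (-9/32 : ℂ) * z 0 * z 3 ^ 5 * h0 + (-27/1280 : ℂ) * z 0 * z 2 ^ 2 * z 3 ^ 3 * h0 + (81/256 : ℂ) * z 0 * z 2 ^ 4 * z 3 * h0 + (-27/80 : ℂ) * z 0 * z 1 ^ 2 * z 3 ^ 3 * h0 + (-243/640 : ℂ) * z 0 * z 1 ^ 2 * z 2 ^ 2 * z 3 * h0 + (-33/160 : ℂ) * z 1 * z 3 ^ 5 * h1 + (-63/1280 : ℂ) * z 1 * z 2 ^ 2 * z 3 ^ 3 * h1 + (297/1280 : ℂ) * z 1 * z 2 ^ 4 * z 3 * h1 + (9/40 : ℂ) * z 1 ^ 3 * z 3 ^ 3 * h1 + (81/320 : ℂ) * z 1 ^ 3 * z 2 ^ 2 * z 3 * h1 + (9/80 : ℂ) * z 0 ^ 2 * z 1 * z 3 ^ 3 * h1 + (81/640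 : ℂ) * z 0 ^ 2 * z 1 * z 2 ^ 2 * z 3 * h1 + (-129/1280 : ℂ) * z 2 * z 3 ^ 5 * h2 + (603/1280 : ℂ) * z 2 ^ 3 * z 3 ^ 3 * h2 + (-27/128 : ℂ) * z 2 ^ 5 * z 3 * h2 + (63/256 : ℂ) * z 1 ^ 2 * z 2 * z 3 ^ 3 * h2 + (-189/1280 : ℂ) * z 1 ^ 2 * z 2 ^ 3 * z 3 * h2 + (27/320 : ℂ) * z 1 ^ 4 * z 2 * z 3 * h2 + (9/1280 : ℂ) * z 0 ^ 2 * z 2 * z 3 ^ 3 * h2 + (-27/256 : ℂ) * z 0 ^ 2 * z 2 ^ 3 * z 3 * h2 + (1/4 : ℂ) * z 3 ^ 6 * h3 + (-573/1280 : ℂ) * z 2 ^ 2 * z 3 ^ 4 * h3 + (39/1280 : ℂ) * z 2 ^ 4 * z 3 ^ 2 * h3 + (9/128 : ℂ) * z 2 ^ 6 * h3 + (-21/160 : ℂ) * z 1 ^ 2 * z 3 ^ 4 * h3 + (9/40 : ℂ) * z 1 ^ 2 * z 2 ^ 2 * z 3 ^ 2 * h3 + (-3/40 : ℂ) * z 1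 ^ 4 * z 3 ^ 2 * h3 + (-3/32 : ℂ) * z 0 ^ 2 * z 3 ^ 4 * h3
  funext i
  fin_cases i <;>
    simpa using pow_eq_zero_iff (n := 9) (by norm_num) |>.mp (by assumption)
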